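/- Let s ≥ 1, t ≥ 2, z ≥ 1 and λ be natural numbers with z ≤ λ ≤ z + s − 1, and set θ = t·s + λ. Define P_CA = {j + s·i : 0 ≤ j ≤ s−1, 0 ≤ i ≤ t−1}, P_CB = {(s−1−k) + θ·l : 0 ≤ k ≤ s−1, 0 ≤ l ≤ t−1}, P_SA = {t·s + u : 0 ≤ u ≤ z−1}, and P_SB = {t·s + θ·(t−1) + r : 0 ≤ r ≤ z−1}. Then the sumset (P_CA ∪ P_SA) + (P_CB ∪ P_SB) has cardinality 2·t·s + (t·s+λ)·(t−1) + 2z − 1. -/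

import Mathlib

/-!
The left summand is an initial segment: `P_CA = [0, ts)` and `P_SA = [ts, ts + z)`, so it equals
`[0, a)` with `a = ts + z`. Adding `[0, a)` to a set `B` with maximum `c` gives `[0, a + c)` as soon
as every point below `c` lies less than `a` above some element of `B`. The blocks of `P_CB` are
`s` consecutive integers starting at the multiples of `θ`, so the gaps they leave have length
`θ - s = ts + λ - s < a` exactly when `λ ≤ z + s - 1`; above `P_CB`, the run `P_SB` of `z`
consecutive integers reaches the maximum `c = ts + θ(t - 1) + z - 1`.
-/

open Pointwise

theorem Set.Iio_add_eq_Iio_of_cover {a c : ℕ} {B : Set ℕ} (hc : c ∈ B) (hle : ∀ b ∈ B, b ≤ c)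
    (hcover : ∀ n < c, ∃ b ∈ B, b ≤ n ∧ n < b + a) :
    Set.Iio a + B = Set.Iio (a + c) := by
  apply Set.Subset.antisymm
  · rintro _ ⟨x, hx, b, hb, rfl⟩
    have := hle b hb
    simp only [Set.mem_Iio] at hx ⊢
    omega
  · intro n hn
    rw [Set.mem_Iio] at hn
    by_cases hnc : n < c
    · obtain ⟨b, hb, hbn, hnb⟩ := hcover n hnc
      exact ⟨n - b, by simp only [Set.mem_Iio]; omega, b, hb, by simp only; omega⟩
    · exact ⟨n - c, by simp only [Set.mem_Iio]; omega, c, hc, by simp only; omega⟩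

theorem setOf_add_mul_eq_Iio (s t : ℕ) :
    {n : ℕ | ∃ j i, j < s ∧ i < t ∧ n = j + s * i} = Set.Iio (t * s) := by
  ext n
  simp only [Set.mem_ofPred_eq, Set.mem_Iio]
  constructor
  · rintro ⟨j, i, hj, hi, rfl⟩
    have : s * i + s ≤ t * s := by nlinarith
    omega
  · intro hn
    have hs : 0 < s := Nat.pos_of_ne_zero fun h => by simp [h] at hn
    exact ⟨n % s, n / s, Nat.mod_lt n hs, (Nat.div_lt_iff_lt_mul hs).mpr hn,
      (Nat.mod_add_div n s).symm⟩

theorem Iio_union_setOf_add_eq_Iio (m z : ℕ) :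
    Set.Iio m ∪ {n : ℕ | ∃ u, u < z ∧ n = m + u} = Set.Iio (m + z) := by
  ext n
  simp only [Set.mem_union, Set.mem_Iio, Set.mem_ofPred_eq]
  constructor
  · rintro (hn | ⟨u, hu, rfl⟩) <;> omega
  · intro hn
    by_cases hnm : n < m
    · exact Or.inl hnm
    · exact Or.inr ⟨n - m, by omega, by omega⟩

/-- The paper's `P_CB`, with `θ` in place of `ts + λ`. -/
def codedSupportB (s t θ : ℕ) : Set ℕ :=
  {n | ∃ k l, k < s ∧ l < t ∧ n = (s - 1 - k) + θ * l}

theorem lt_of_mem_codedSupportB {s t θ b : ℕ} (hb : b ∈ codedSupportB s t θ) :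
    b < t * s + θ * (t - 1) := by
  obtain ⟨k, l, hk, hl, rfl⟩ := hb
  have hθl : θ * l ≤ θ * (t - 1) := Nat.mul_le_mul_left θ (by omega)
  have hst : s ≤ t * s := Nat.le_mul_of_pos_left s (by omega)
  omega

theorem exists_mem_codedSupportB_near {s t θ n : ℕ} (hs : 1 ≤ s) (hn : n < θ * t) :
    ∃ b ∈ codedSupportB s t θ, b ≤ n ∧ n ≤ b + (θ - s) := by
  have hθ : 0 < θ := Nat.pos_of_ne_zero fun h => by simp [h] at hn
  have hl : n / θ < t := (Nat.div_lt_iff_lt_mul hθ).mpr (by rwa [mul_comm])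
  have hd : n % θ < θ := Nat.mod_lt n hθ
  have hdecomp : θ * (n / θ) + n % θ = n := Nat.div_add_mod n θ
  by_cases hds : n % θ < s
  · exact ⟨n, ⟨s - 1 - n % θ, n / θ, by omega, hl, by omega⟩, le_rfl, by omega⟩
  · exact ⟨s - 1 + θ * (n / θ), ⟨0, n / θ, hs, hl, rfl⟩, by omega, by omega⟩

theorem age_workers_lambda_ge_z_case1_general (s t z lam : ℕ) (hs : 1 ≤ s)
    (hz : 1 ≤ z) (hlam2 : lam ≤ z + s - 1) :
    (({n : ℕ | ∃ j i, j < s ∧ i < t ∧ n = j + s * i} ∪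
      {n : ℕ | ∃ u, u < z ∧ n = t * s + u}) +
     ({n : ℕ | ∃ k l, k < s ∧ l < t ∧ n = (s - 1 - k) + (t * s + lam) * l} ∪
      {n : ℕ | ∃ r, r < z ∧ n = t * s + (t * s + lam) * (t - 1) + r})).ncard
      = 2 * (t * s) + (t * s + lam) * (t - 1) + 2 * z - 1 := by
  set θ := t * s + lam
  have hstart : t * s + θ * (t - 1) ≤ θ * t := by
    rcases Nat.eq_zero_or_pos t with rfl | ht
    · simp
    · have := Nat.mul_sub_one θ t
      have := Nat.le_mul_of_pos_right θ ht
      omega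
  rw [setOf_add_mul_eq_Iio, Iio_union_setOf_add_eq_Iio,
    Set.Iio_add_eq_Iio_of_cover (c := t * s + θ * (t - 1) + (z - 1)), Set.ncard_Iio_nat]
  · omega
  · exact Or.inr ⟨z - 1, by omega, rfl⟩
  · rintro b (hb | ⟨r, hr, rfl⟩)
    · have := lt_of_mem_codedSupportB hb
      omega
    · omega
  · intro n hn
    by_cases hcoded : n < t * s + θ * (t - 1)
    · obtain ⟨b, hb, hbn, hnb⟩ := exists_mem_codedSupportB_near hs (hcoded.trans_le hstart)
      exact ⟨b, Or.inl hb, hbn, by omega⟩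
    · exact ⟨t * s + θ * (t - 1), Or.inr ⟨0, by omega, rfl⟩, by omega, by omega⟩

/-- AGE-CMPC worker count for z ≤ λ ≤ z + s − 1 (θ = t·s + λ),
Case 1 of the Appendix H lemma:
|(P_CA ∪ P_SA) + (P_CB ∪ P_SB)| = 2ts + (ts+λ)(t−1) + 2z − 1. -/
theorem age_workers_lambda_ge_z_case1 (s t z lam : ℕ) (hs : 1 ≤ s) (ht : 2 ≤ t)
    (hz : 1 ≤ z) (hlam1 : z ≤ lam) (hlam2 : lam ≤ z + s - 1) :
    (({n : ℕ | ∃ j i, j < s ∧ i < t ∧ n = j + s * i} ∪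
      {n : ℕ | ∃ u, u < z ∧ n = t * s + u}) +
     ({n : ℕ | ∃ k l, k < s ∧ l < t ∧ n = (s - 1 - k) + (t * s + lam) * l} ∪
      {n : ℕ | ∃ r, r < z ∧ n = t * s + (t * s + lam) * (t - 1) + r})).ncard
      = 2 * (t * s) + (t * s + lam) * (t - 1) + 2 * z - 1 :=
  age_workers_lambda_ge_z_case1_general s t z lam hs hz hlam2
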